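/- (Appendix, equations (a.2)–(a.3), first identity.) J(1,0) = π³ · ∫₀^∞ e^{−2λ}·(I₀(λ/2))² dλ. -/

import Mathlib

open MeasureTheory

noncomputable abbrev R2 : Type := EuclideanSpace ℝ (Fin 2)

/-- The modified Bessel function of order zero. -/
noncomputable def I0 (x : ℝ) : ℝ :=
  (1 / Real.pi) * ∫ θ in (0:ℝ)..Real.pi, Real.exp (x * Real.cos θ)

/-- The function `J(μ₁,μ₂)` of (3.65). -/
noncomputable def Jfun (μ₁ μ₂ : ℝ) : ℝ :=
  ∫ q₂ : R2, (∫ q₁ : R2,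
    Real.exp (-(1/2) * (μ₁ ^ 2 + μ₂ ^ 2) * ‖q₁ + q₂‖ ^ 2
        - ‖μ₂ • q₁ - μ₁ • q₂‖ ^ 2 - ‖q₁‖ ^ 2 / 2) *
      I0 (|μ₁ - μ₂| * ‖q₁ + q₂‖ * ‖μ₂ • q₁ - μ₁ • q₂‖)) ^ 2

/-! Writing `I₀(‖a‖ ‖b‖)` as the average over `θ` of `exp ⟪a, R_θ b⟫`, where `R_θ` is the
rotation by `θ`, turns the inner integral of `J(1,0)` into an average of Gaussian integrals with a
linear term. Completing the square and using Fubini, it equals `π e^{-|q₂|²} I₀(|q₂|²/2)`. The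
outer integral then depends on `q₂` only through `|q₂|²`, and polar coordinates with `λ = |q₂|²`
reduce it to the one-dimensional integral. -/

open Real Module GaussianFourier
open scoped RealInnerProductSpace EuclideanSpace

theorem integral_exp_mul_cos (x : ℝ) :
    ∫ θ in (0 : ℝ)..2 * π, exp (x * cos θ) = 2 * π * I0 x := by
  have hsymm : ∫ θ in π..2 * π, exp (x * cos θ) = ∫ θ in (0 : ℝ)..π, exp (x * cos θ) := by
    have := intervalIntegral.integral_comp_sub_left (fun θ => exp (x * cos θ)) (2 * π)
      (a := 0) (b := π)
    simp only [cos_two_pi_sub, sub_zero] at this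
    rw [this, two_mul, add_sub_cancel_right]
  rw [← intervalIntegral.integral_add_adjacent_intervals (b := π)
      (Continuous.intervalIntegrable (by fun_prop) _ _)
      (Continuous.intervalIntegrable (by fun_prop) _ _), hsymm, I0]
  field_simp
  ring

theorem integral_exp_mul_cos_add (x φ : ℝ) :
    ∫ θ in (0 : ℝ)..2 * π, exp (x * cos (θ + φ)) = 2 * π * I0 x := by
  have hper : Function.Periodic (fun θ => exp (x * cos θ)) (2 * π) := fun θ => by
    simp [cos_add_two_pi]
  rw [intervalIntegral.integral_comp_add_right (fun θ => exp (x * cos θ)), zero_add,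
    add_comm _ φ, hper.intervalIntegral_add_eq φ 0, zero_add, integral_exp_mul_cos]

theorem integral_exp_re_circleExp_mul (c : ℂ) :
    ∫ θ in (0 : ℝ)..2 * π, exp ((Circle.exp θ * c : ℂ).re) = 2 * π * I0 ‖c‖ := by
  have hre (θ : ℝ) : (Circle.exp θ * c : ℂ).re = ‖c‖ * cos (θ + c.arg) := by
    conv_lhs => rw [← c.norm_mul_exp_arg_mul_I, Circle.coe_exp, mul_left_comm, ← Complex.exp_add,
      ← add_mul, ← Complex.ofReal_add, Complex.re_ofReal_mul, Complex.exp_ofReal_mul_I_re]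
  simp only [hre, integral_exp_mul_cos_add]

namespace Orientation

variable {V : Type*} [NormedAddCommGroup V] [InnerProductSpace ℝ V] [Fact (finrank ℝ V = 2)]
  (o : Orientation ℝ V (Fin 2))

theorem inner_rotation_right_eq_re (x y : V) (θ : Real.Angle) :
    ⟪x, o.rotation θ y⟫ = (θ.toCircle * o.kahler x y : ℂ).re := by
  rw [← o.kahler_rotation_right]
  simp [kahler_apply_apply]

theorem inner_rotation_self (x : V) (θ : ℝ) : ⟪x, o.rotation θ x⟫ = ‖x‖ ^ 2 * cos θ := by
  rw [inner_rotation_right_eq_re, kahler_apply_self, Real.Angle.toCircle_coe, Circle.coe_exp,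
    ← Complex.ofReal_pow, mul_comm, Complex.re_ofReal_mul, Complex.exp_ofReal_mul_I_re]

theorem continuous_rotation_apply (x : V) : Continuous fun θ : ℝ => o.rotation θ x := by
  simp only [o.rotation_apply, Real.Angle.cos_coe, Real.Angle.sin_coe]
  fun_prop

theorem I0_norm_mul_norm_eq_integral (x y : V) :
    I0 (‖x‖ * ‖y‖) = (2 * π)⁻¹ * ∫ θ in (0 : ℝ)..2 * π, exp ⟪x, o.rotation θ y⟫ := by
  simp only [inner_rotation_right_eq_re, Real.Angle.toCircle_coe, integral_exp_re_circleExp_mul,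
    norm_kahler]
  field_simp

end Orientation

section Gaussian

variable {V : Type*} [NormedAddCommGroup V] [InnerProductSpace ℝ V] [FiniteDimensional ℝ V]
  [MeasurableSpace V] [BorelSpace V]

theorem integrable_exp_neg_mul_sq_norm {b : ℝ} (hb : 0 < b) :
    Integrable (fun v : V => exp (-b * ‖v‖ ^ 2)) :=
  Integrable.of_integral_ne_zero (by rw [integral_rexp_neg_mul_sq_norm hb]; positivity)

theorem integral_exp_neg_sq_norm_add_inner (w : V) :
    ∫ v : V, exp (-‖v‖ ^ 2 + ⟪w, v⟫) = π ^ (finrank ℝ V / 2 : ℝ) * exp (‖w‖ ^ 2 / 4) := by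
  have hsq (v : V) : -‖v‖ ^ 2 + ⟪w, v⟫ = -1 * ‖v - (1 / 2 : ℝ) • w‖ ^ 2 + ‖w‖ ^ 2 / 4 := by
    rw [norm_sub_sq_real, inner_smul_right, norm_smul, real_inner_comm, Real.norm_eq_abs,
      abs_of_pos (by norm_num : (0 : ℝ) < 1 / 2)]
    ring
  simp only [hsq, exp_add]
  rw [integral_mul_const, integral_sub_right_eq_self (fun v => exp (-1 * ‖v‖ ^ 2)),
    integral_rexp_neg_mul_sq_norm one_pos, div_one]

end Gaussian

section Plane

attribute [local instance] FiniteDimensional.of_fact_finrank_eq_two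

variable {V : Type*} [NormedAddCommGroup V] [InnerProductSpace ℝ V] [Fact (finrank ℝ V = 2)]
  [MeasurableSpace V] [BorelSpace V]

theorem integral_exp_quadratic_add_inner (q w : V) (hw : ‖w‖ = ‖q‖) :
    ∫ p : V, exp (-(1 / 2) * ‖p + q‖ ^ 2 - ‖q‖ ^ 2 - ‖p‖ ^ 2 / 2 + ⟪p + q, w⟫)
      = π * exp (⟪q, w⟫ / 2 - ‖q‖ ^ 2) := by
  have hsplit (p : V) : exp (-(1 / 2) * ‖p + q‖ ^ 2 - ‖q‖ ^ 2 - ‖p‖ ^ 2 / 2 + ⟪p + q, w⟫)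
      = exp (-‖p‖ ^ 2 + ⟪w - q, p⟫) * exp (⟪q, w⟫ - 3 / 2 * ‖q‖ ^ 2) := by
    rw [← exp_add, norm_add_sq_real, inner_add_left, inner_sub_left, real_inner_comm w p,
      real_inner_comm q p]
    ring_nf
  simp only [hsplit]
  rw [integral_mul_const, integral_exp_neg_sq_norm_add_inner, norm_sub_sq_real, hw,
    real_inner_comm w q, Fact.out (p := finrank ℝ V = 2), mul_assoc, ← exp_add]
  norm_num
  ring_nf

theorem integrable_exp_quadratic_add_inner_rotation (o : Orientation ℝ V (Fin 2)) (q : V) :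
    Integrable (fun z : V × ℝ => exp (-(1 / 2) * ‖z.1 + q‖ ^ 2 - ‖q‖ ^ 2 - ‖z.1‖ ^ 2 / 2
      + ⟪z.1 + q, o.rotation z.2 q⟫)) (volume.prod (volume.restrict (Set.Ioc 0 (2 * π)))) := by
  have hcont : Continuous fun z : V × ℝ => o.rotation z.2 q :=
    (o.continuous_rotation_apply q).comp continuous_snd
  refine ((integrable_exp_neg_mul_sq_norm (by norm_num : (0 : ℝ) < 1 / 2)).comp_fst _).mono'
    (by fun_prop : Continuous _).aestronglyMeasurable (Filter.Eventually.of_forall fun z => ?_)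
  have hCS : ⟪z.1 + q, o.rotation z.2 q⟫ ≤ ‖z.1 + q‖ * ‖q‖ := by
    simpa using real_inner_le_norm (z.1 + q) (o.rotation z.2 q)
  rw [Real.norm_of_nonneg (exp_nonneg _), exp_le_exp]
  nlinarith [sq_nonneg (‖z.1 + q‖ - ‖q‖)]

theorem integral_exp_quadratic_mul_I0 (q : V) :
    ∫ p : V, exp (-(1 / 2) * ‖p + q‖ ^ 2 - ‖q‖ ^ 2 - ‖p‖ ^ 2 / 2) * I0 (‖p + q‖ * ‖q‖)
      = π * exp (-‖q‖ ^ 2) * I0 (‖q‖ ^ 2 / 2) := by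
  let o : Orientation ℝ V (Fin 2) := (finBasisOfFinrankEq ℝ V Fact.out).orientation
  set F : V → ℝ → ℝ := fun p θ =>
    exp (-(1 / 2) * ‖p + q‖ ^ 2 - ‖q‖ ^ 2 - ‖p‖ ^ 2 / 2 + ⟪p + q, o.rotation θ q⟫)
  have hrep (p : V) : exp (-(1 / 2) * ‖p + q‖ ^ 2 - ‖q‖ ^ 2 - ‖p‖ ^ 2 / 2) * I0 (‖p + q‖ * ‖q‖)
      = (2 * π)⁻¹ * ∫ θ in Set.Ioc 0 (2 * π), F p θ := by
    rw [o.I0_norm_mul_norm_eq_integral, intervalIntegral.integral_of_le two_pi_pos.le,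
      mul_left_comm, ← integral_const_mul]
    simp only [F, exp_add]
  have hslice (θ : ℝ) : ∫ p, F p θ = π * exp (-‖q‖ ^ 2) * exp (‖q‖ ^ 2 / 2 * cos θ) := by
    rw [integral_exp_quadratic_add_inner q _ (LinearIsometryEquiv.norm_map _ _),
      o.inner_rotation_self, mul_assoc, ← exp_add]
    ring_nf
  calc _ = (2 * π)⁻¹ * ∫ p, ∫ θ in Set.Ioc 0 (2 * π), F p θ := by
        simp only [hrep, integral_const_mul]
    _ = (2 * π)⁻¹ * ∫ θ in Set.Ioc 0 (2 * π), ∫ p, F p θ := by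
        rw [integral_integral_swap (integrable_exp_quadratic_add_inner_rotation o q)]
    _ = π * exp (-‖q‖ ^ 2) * I0 (‖q‖ ^ 2 / 2) := by
        simp only [hslice, integral_const_mul]
        rw [← intervalIntegral.integral_of_le two_pi_pos.le, integral_exp_mul_cos]
        field_simp

theorem integral_comp_sq_norm_of_finrank_eq_two (f : ℝ → ℝ) :
    ∫ x : V, f (‖x‖ ^ 2) = π * ∫ t in Set.Ioi 0, f t := by
  have hdim : finrank ℝ V = 2 := Fact.out
  have : Nontrivial V := Module.nontrivial_of_finrank_eq_succ hdim
  have hball : volume.real (Metric.ball (0 : V) 1) = π := by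
    rw [measureReal_def, InnerProductSpace.volume_ball, hdim]
    norm_num [sq_sqrt pi_pos.le, Real.Gamma_two]
    positivity
  rw [integral_fun_norm_addHaar volume (fun r => f (r ^ 2)), hball, hdim,
    ← integral_comp_rpow_Ioi_of_pos (g := f) two_pos, nsmul_eq_mul, smul_eq_mul,
    ← integral_const_mul, ← integral_const_mul, ← integral_const_mul]
  refine setIntegral_congr_fun measurableSet_Ioi fun r _ => ?_
  norm_num
  ring

end Plane

/-- Appendix, equations (a.2)-(a.3), first identity:
`J(1,0) = π³ ∫₀^∞ e^{-2λ} (I₀(λ/2))² dλ`. -/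
theorem J_one_zero :
    Jfun 1 0 = Real.pi ^ 3 * ∫ l in Set.Ioi (0:ℝ), Real.exp (-2 * l) * (I0 (l / 2)) ^ 2 := by
  have hinner (q₂ : R2) : ∫ q₁ : R2, exp (-(1 / 2) * (1 ^ 2 + 0 ^ 2) * ‖q₁ + q₂‖ ^ 2
        - ‖(0 : ℝ) • q₁ - (1 : ℝ) • q₂‖ ^ 2 - ‖q₁‖ ^ 2 / 2)
          * I0 (|(1 : ℝ) - 0| * ‖q₁ + q₂‖ * ‖(0 : ℝ) • q₁ - (1 : ℝ) • q₂‖)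
      = π * exp (-‖q₂‖ ^ 2) * I0 (‖q₂‖ ^ 2 / 2) := by
    simpa using integral_exp_quadratic_mul_I0 q₂
  calc Jfun 1 0 = ∫ q : R2, π ^ 2 * (exp (-2 * ‖q‖ ^ 2) * I0 (‖q‖ ^ 2 / 2) ^ 2) := by
        simp only [Jfun, hinner]
        congr 1 with q
        rw [mul_pow, mul_pow, ← exp_nat_mul]
        ring_nf
    _ = _ := by
        rw [integral_comp_sq_norm_of_finrank_eq_two
          (fun t => π ^ 2 * (exp (-2 * t) * I0 (t / 2) ^ 2)), integral_const_mul]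
        ring
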